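/- The free radial wave evolution on ℝ^{1+5} of data (f, 0) with f(r) = r^{−3} for r ≥ R (and f arbitrary, vanishing for r ≤ R/2, inside) satisfies w(t,r) = r^{−3} on the exterior cone {r ≥ R + |t|}; similarly, data (0, r^{−3}) on r ≥ R evolves as w(t,r) = t r^{−3} on {r ≥ R + |t|}. Consequently the exterior energy ∫_{r > R + |t|}(w_t² + w_r²) r⁴ dr need not grow, and in fact tends to 0 as |t| → ∞ for these solutions. -/

import Mathlib

open Real Set MeasureTheory
open scoped ContDiff

noncomputable section WaveAux

def D1 (G : ℝ × ℝ → ℝ) : ℝ × ℝ → ℝ := fun p => fderiv ℝ G p (1, 0)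
def D2 (G : ℝ × ℝ → ℝ) : ℝ × ℝ → ℝ := fun p => fderiv ℝ G p (0, 1)

lemma contDiffAt_fderiv {G : ℝ × ℝ → ℝ} {p : ℝ × ℝ}
    (h : ContDiffAt ℝ ∞ G p) : ContDiffAt ℝ ∞ (fderiv ℝ G) p :=
  ContDiffAt.fderiv_right h (by norm_num)

lemma contDiffAt_D1 {G : ℝ × ℝ → ℝ} {p : ℝ × ℝ}
    (h : ContDiffAt ℝ ∞ G p) : ContDiffAt ℝ ∞ (D1 G) p :=
  (contDiffAt_fderiv h).clm_apply contDiffAt_const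

lemma contDiffAt_D2 {G : ℝ × ℝ → ℝ} {p : ℝ × ℝ}
    (h : ContDiffAt ℝ ∞ G p) : ContDiffAt ℝ ∞ (D2 G) p :=
  (contDiffAt_fderiv h).clm_apply contDiffAt_const

-- slice derivatives
lemma hasDerivAt_slice1 {G : ℝ × ℝ → ℝ} {p : ℝ × ℝ}
    (h : DifferentiableAt ℝ G p) :
    HasDerivAt (fun s => G (s, p.2)) (D1 G p) p.1 := by
  have hline : HasDerivAt (fun s : ℝ => (s, p.2)) ((1:ℝ), (0:ℝ)) p.1 :=
    (hasDerivAt_id p.1).prodMk (hasDerivAt_const p.1 p.2)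
  have := h.hasFDerivAt.comp_hasDerivAt p.1 hline
  exact this

lemma hasDerivAt_slice2 {G : ℝ × ℝ → ℝ} {p : ℝ × ℝ}
    (h : DifferentiableAt ℝ G p) :
    HasDerivAt (fun ρ => G (p.1, ρ)) (D2 G p) p.2 := by
  have hline : HasDerivAt (fun ρ : ℝ => (p.1, ρ)) ((0:ℝ), (1:ℝ)) p.2 :=
    (hasDerivAt_const p.2 p.1).prodMk (hasDerivAt_id p.2)
  have := h.hasFDerivAt.comp_hasDerivAt p.2 hline
  exact this

-- symmetry of second derivatives
lemma D_symm {G : ℝ × ℝ → ℝ} {p : ℝ × ℝ}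
    (h : ContDiffAt ℝ ∞ G p) : D1 (D2 G) p = D2 (D1 G) p := by
  have hsymm : IsSymmSndFDerivAt ℝ G p :=
    h.isSymmSndFDerivAt (by simp; exact ENat.LEInfty.out)
  have hdiff : DifferentiableAt ℝ (fderiv ℝ G) p :=
    (contDiffAt_fderiv h).differentiableAt (by norm_num)
  have h1 : fderiv ℝ (D2 G) p (1,0) = (fderiv ℝ (fderiv ℝ G) p (1,0)) (0,1) := by
    have : D2 G = fun q => (fderiv ℝ G q) ((0:ℝ),(1:ℝ)) := rfl
    rw [this, fderiv_clm_apply hdiff (differentiableAt_const _)]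
    simp
  have h2 : fderiv ℝ (D1 G) p (0,1) = (fderiv ℝ (fderiv ℝ G) p (0,1)) (1,0) := by
    have : D1 G = fun q => (fderiv ℝ G q) ((1:ℝ),(0:ℝ)) := rfl
    rw [this, fderiv_clm_apply hdiff (differentiableAt_const _)]
    simp
  show fderiv ℝ (D2 G) p (1,0) = fderiv ℝ (D1 G) p (0,1)
  rw [h1, h2]
  exact hsymm (1,0) (0,1)


-- eventual equality
lemma D1_congr {G₁ G₂ : ℝ × ℝ → ℝ} {p : ℝ × ℝ} (h : G₁ =ᶠ[nhds p] G₂) :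
    D1 G₁ p = D1 G₂ p := by unfold D1; rw [h.fderiv_eq]

lemma D2_congr {G₁ G₂ : ℝ × ℝ → ℝ} {p : ℝ × ℝ} (h : G₁ =ᶠ[nhds p] G₂) :
    D2 G₁ p = D2 G₂ p := by unfold D2; rw [h.fderiv_eq]

-- directional derivative arithmetic
lemma Dv_add {f g : ℝ × ℝ → ℝ} {p v : ℝ × ℝ}
    (hf : DifferentiableAt ℝ f p) (hg : DifferentiableAt ℝ g p) :
    fderiv ℝ (fun q => f q + g q) p v = fderiv ℝ f p v + fderiv ℝ g p v := by
  rw [fderiv_fun_add hf hg]; simp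

lemma Dv_sub {f g : ℝ × ℝ → ℝ} {p v : ℝ × ℝ}
    (hf : DifferentiableAt ℝ f p) (hg : DifferentiableAt ℝ g p) :
    fderiv ℝ (fun q => f q - g q) p v = fderiv ℝ f p v - fderiv ℝ g p v := by
  rw [fderiv_fun_sub hf hg]; simp

lemma Dv_mul {f g : ℝ × ℝ → ℝ} {p v : ℝ × ℝ}
    (hf : DifferentiableAt ℝ f p) (hg : DifferentiableAt ℝ g p) :
    fderiv ℝ (fun q => f q * g q) p v
      = fderiv ℝ f p v * g p + f p * fderiv ℝ g p v := by
  rw [fderiv_fun_mul hf hg]; simp [smul_eq_mul]; ring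

lemma Dv_snd {p v : ℝ × ℝ} :
    fderiv ℝ (fun q : ℝ × ℝ => q.2) p v = v.2 := by
  have : fderiv ℝ (fun q : ℝ × ℝ => q.2) p = ContinuousLinearMap.snd ℝ ℝ ℝ :=
    (ContinuousLinearMap.snd ℝ ℝ ℝ).fderiv
  rw [this]; rfl

lemma Dv_fst {p v : ℝ × ℝ} :
    fderiv ℝ (fun q : ℝ × ℝ => q.1) p v = v.1 := by
  have : fderiv ℝ (fun q : ℝ × ℝ => q.1) p = ContinuousLinearMap.fst ℝ ℝ ℝ :=
    (ContinuousLinearMap.fst ℝ ℝ ℝ).fderiv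
  rw [this]; rfl

-- constancy along segments
lemma eq_of_hasDerivAt_zero_Icc {f : ℝ → ℝ} {a b : ℝ} (hab : a ≤ b)
    (hf : ∀ x ∈ Icc a b, HasDerivAt f 0 x) : f b = f a := by
  have hcont : ContinuousOn f (Icc a b) :=
    fun x hx => (hf x hx).continuousAt.continuousWithinAt
  have := constant_of_has_deriv_right_zero hcont
    (fun x hx => ((hf x (Ico_subset_Icc_self hx)).hasDerivWithinAt))
  exact this b ⟨hab, le_rfl⟩

lemma eq_of_hasDerivAt_zero_uIcc {f : ℝ → ℝ} {t : ℝ}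
    (hf : ∀ s ∈ uIcc 0 t, HasDerivAt f 0 s) : f t = f 0 := by
  rcases le_total 0 t with h | h
  · exact eq_of_hasDerivAt_zero_Icc h (fun x hx => hf x (by
      rw [uIcc_of_le h]; exact hx))
  · exact (eq_of_hasDerivAt_zero_Icc h (fun x hx => hf x (by
      rw [uIcc_of_ge h]; exact hx))).symm

lemma diffAt {G : ℝ × ℝ → ℝ} {p : ℝ × ℝ} (h : ContDiffAt ℝ ∞ G p) :
    DifferentiableAt ℝ G p := h.differentiableAt (by norm_num)

lemma D2_eq_of_eventually {G : ℝ × ℝ → ℝ} {p : ℝ × ℝ} (hG : DifferentiableAt ℝ G p)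
    {g : ℝ → ℝ} {g' : ℝ} (hg : HasDerivAt g g' p.2)
    (hev : (fun ρ => G (p.1, ρ)) =ᶠ[nhds p.2] g) : D2 G p = g' :=
  (hasDerivAt_slice2 hG).unique (hg.congr_of_eventuallyEq hev)

lemma D1_eq_of_eventually {G : ℝ × ℝ → ℝ} {p : ℝ × ℝ} (hG : DifferentiableAt ℝ G p)
    {g : ℝ → ℝ} {g' : ℝ} (hg : HasDerivAt g g' p.1)
    (hev : (fun s => G (s, p.2)) =ᶠ[nhds p.1] g) : D1 G p = g' :=
  (hasDerivAt_slice1 hG).unique (hg.congr_of_eventuallyEq hev)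

/-- The 1d-wave reduction `Φ = r² ∂_r H + 3 r H`. -/
def Phi (H : ℝ × ℝ → ℝ) : ℝ × ℝ → ℝ := fun p => p.2 * p.2 * D2 H p + 3 * p.2 * H p

lemma contDiffAt_Phi {H : ℝ × ℝ → ℝ} {p : ℝ × ℝ} (hH : ContDiffAt ℝ ∞ H p) :
    ContDiffAt ℝ ∞ (Phi H) p := by
  exact ((contDiffAt_snd.mul contDiffAt_snd).mul (contDiffAt_D2 hH)).add
    ((contDiffAt_const.mul contDiffAt_snd).mul hH)

lemma D1_Phi_eq {H : ℝ × ℝ → ℝ} {p : ℝ × ℝ} (hH : ContDiffAt ℝ ∞ H p) :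
    D1 (Phi H) p = p.2 * p.2 * D1 (D2 H) p + 3 * p.2 * D1 H p := by
  have hs : DifferentiableAt ℝ (fun q : ℝ × ℝ => q.2 * q.2) p :=
    differentiableAt_snd.mul differentiableAt_snd
  have hA : DifferentiableAt ℝ (D2 H) p := diffAt (contDiffAt_D2 hH)
  have h3 : DifferentiableAt ℝ (fun q : ℝ × ℝ => 3 * q.2) p :=
    (differentiableAt_const _).mul differentiableAt_snd
  have hHd : DifferentiableAt ℝ H p := diffAt hH
  show fderiv ℝ (fun q => (fun q : ℝ × ℝ => q.2 * q.2) q * D2 H q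
      + (fun q : ℝ × ℝ => 3 * q.2) q * H q) p (1, 0) = _
  rw [Dv_add (hs.fun_mul hA) (h3.fun_mul hHd), Dv_mul hs hA, Dv_mul h3 hHd,
    Dv_mul differentiableAt_snd differentiableAt_snd,
    Dv_mul (differentiableAt_const _) differentiableAt_snd]
  simp only [Dv_snd, fderiv_fun_const, Pi.zero_apply, ContinuousLinearMap.zero_apply]
  simp only [D1]
  ring



lemma D2_Phi_eq {H : ℝ × ℝ → ℝ} {p : ℝ × ℝ} (hH : ContDiffAt ℝ ∞ H p) :
    D2 (Phi H) p = p.2 * p.2 * D2 (D2 H) p + 5 * p.2 * D2 H p + 3 * H p := by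
  have hs : DifferentiableAt ℝ (fun q : ℝ × ℝ => q.2 * q.2) p :=
    differentiableAt_snd.mul differentiableAt_snd
  have hA : DifferentiableAt ℝ (D2 H) p := diffAt (contDiffAt_D2 hH)
  have h3 : DifferentiableAt ℝ (fun q : ℝ × ℝ => 3 * q.2) p :=
    (differentiableAt_const _).mul differentiableAt_snd
  have hHd : DifferentiableAt ℝ H p := diffAt hH
  show fderiv ℝ (fun q => (fun q : ℝ × ℝ => q.2 * q.2) q * D2 H q
      + (fun q : ℝ × ℝ => 3 * q.2) q * H q) p (0, 1) = _
  rw [Dv_add (hs.fun_mul hA) (h3.fun_mul hHd), Dv_mul hs hA, Dv_mul h3 hHd,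
    Dv_mul differentiableAt_snd differentiableAt_snd,
    Dv_mul (differentiableAt_const _) differentiableAt_snd]
  simp only [Dv_snd, fderiv_fun_const, Pi.zero_apply, ContinuousLinearMap.zero_apply]
  simp only [D2]
  ring


lemma isOpenU : IsOpen {q : ℝ × ℝ | 0 < q.2} := isOpen_lt continuous_const continuous_snd

lemma D1D1_Phi_eq {H : ℝ × ℝ → ℝ} {p : ℝ × ℝ}
    (hH : ∀ q : ℝ × ℝ, 0 < q.2 → ContDiffAt ℝ ∞ H q) (hp : 0 < p.2) :
    D1 (D1 (Phi H)) p = p.2 * p.2 * D1 (D1 (D2 H)) p + 3 * p.2 * D1 (D1 H) p := by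
  have hev : D1 (Phi H) =ᶠ[nhds p]
      (fun q => (fun q : ℝ × ℝ => q.2 * q.2) q * D1 (D2 H) q
        + (fun q : ℝ × ℝ => 3 * q.2) q * D1 H q) :=
    Filter.eventuallyEq_of_mem (isOpenU.mem_nhds hp) (fun q hq => D1_Phi_eq (hH q hq))
  rw [D1_congr hev]
  have hs : DifferentiableAt ℝ (fun q : ℝ × ℝ => q.2 * q.2) p :=
    differentiableAt_snd.mul differentiableAt_snd
  have hA : DifferentiableAt ℝ (D1 (D2 H)) p :=
    diffAt (contDiffAt_D1 (contDiffAt_D2 (hH p hp)))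
  have h3 : DifferentiableAt ℝ (fun q : ℝ × ℝ => 3 * q.2) p :=
    (differentiableAt_const _).mul differentiableAt_snd
  have hHd : DifferentiableAt ℝ (D1 H) p := diffAt (contDiffAt_D1 (hH p hp))
  show fderiv ℝ _ p (1, 0) = _
  rw [Dv_add (hs.fun_mul hA) (h3.fun_mul hHd), Dv_mul hs hA, Dv_mul h3 hHd,
    Dv_mul differentiableAt_snd differentiableAt_snd,
    Dv_mul (differentiableAt_const _) differentiableAt_snd]
  simp only [Dv_snd, fderiv_fun_const, Pi.zero_apply, ContinuousLinearMap.zero_apply]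
  simp only [D1]
  ring

lemma D2D2_Phi_eq {H : ℝ × ℝ → ℝ} {p : ℝ × ℝ}
    (hH : ∀ q : ℝ × ℝ, 0 < q.2 → ContDiffAt ℝ ∞ H q) (hp : 0 < p.2) :
    D2 (D2 (Phi H)) p = p.2 * p.2 * D2 (D2 (D2 H)) p + 7 * p.2 * D2 (D2 H) p
      + 8 * D2 H p := by
  have hev : D2 (Phi H) =ᶠ[nhds p]
      (fun q => ((fun q : ℝ × ℝ => q.2 * q.2) q * D2 (D2 H) q
        + (fun q : ℝ × ℝ => 5 * q.2) q * D2 H q) + (fun q => 3 * H q) q) :=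
    Filter.eventuallyEq_of_mem (isOpenU.mem_nhds hp) (fun q hq => by
      simpa using D2_Phi_eq (hH q hq))
  rw [D2_congr hev]
  have hs : DifferentiableAt ℝ (fun q : ℝ × ℝ => q.2 * q.2) p :=
    differentiableAt_snd.mul differentiableAt_snd
  have hB : DifferentiableAt ℝ (D2 (D2 H)) p :=
    diffAt (contDiffAt_D2 (contDiffAt_D2 (hH p hp)))
  have h5 : DifferentiableAt ℝ (fun q : ℝ × ℝ => 5 * q.2) p :=
    (differentiableAt_const _).mul differentiableAt_snd
  have hA : DifferentiableAt ℝ (D2 H) p := diffAt (contDiffAt_D2 (hH p hp))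
  have hHd : DifferentiableAt ℝ H p := diffAt (hH p hp)
  show fderiv ℝ _ p (0, 1) = _
  rw [Dv_add ((hs.fun_mul hB).fun_add (h5.fun_mul hA)) ((differentiableAt_const (3:ℝ)).fun_mul hHd),
    Dv_add (hs.fun_mul hB) (h5.fun_mul hA), Dv_mul hs hB, Dv_mul h5 hA,
    Dv_mul (differentiableAt_const _) hHd,
    Dv_mul differentiableAt_snd differentiableAt_snd,
    Dv_mul (differentiableAt_const _) differentiableAt_snd]
  simp only [Dv_snd, fderiv_fun_const, Pi.zero_apply, ContinuousLinearMap.zero_apply]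
  simp only [D2]
  ring


lemma Dv_div_snd {p v : ℝ × ℝ} (hp : p.2 ≠ 0) (c : ℝ) :
    fderiv ℝ (fun q : ℝ × ℝ => c / q.2) p v = (-c / p.2 ^ 2) * v.2 := by
  have h1 : HasDerivAt (fun x : ℝ => c / x) ((0 * p.2 - c * 1) / p.2 ^ 2) p.2 :=
    (hasDerivAt_const p.2 c).div (hasDerivAt_id p.2) hp
  have h2 : HasFDerivAt (fun q : ℝ × ℝ => q.2) (ContinuousLinearMap.snd ℝ ℝ ℝ) p :=
    (ContinuousLinearMap.snd ℝ ℝ ℝ).hasFDerivAt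
  have h3 : HasFDerivAt (fun q : ℝ × ℝ => c / q.2)
      (((0 * p.2 - c * 1) / p.2 ^ 2) • ContinuousLinearMap.snd ℝ ℝ ℝ) p :=
    h1.comp_hasFDerivAt p h2
  rw [h3.fderiv]
  simp [smul_eq_mul]
  try ring

lemma wave_Phi {H : ℝ × ℝ → ℝ} {p : ℝ × ℝ}
    (hH : ∀ q : ℝ × ℝ, 0 < q.2 → ContDiffAt ℝ ∞ H q)
    (hPDE : ∀ q : ℝ × ℝ, 0 < q.2 →
      D1 (D1 H) q = D2 (D2 H) q + (4 / q.2) * D2 H q)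
    (hp : 0 < p.2) :
    D1 (D1 (Phi H)) p = D2 (D2 (Phi H)) p := by
  have hp' : p.2 ≠ 0 := ne_of_gt hp
  -- step 1 : D1 (D1 (D2 H)) p = D2 (D1 (D1 H)) p
  have h1 : D1 (D1 (D2 H)) p = D2 (D1 (D1 H)) p := by
    have hev : D1 (D2 H) =ᶠ[nhds p] D2 (D1 H) :=
      Filter.eventuallyEq_of_mem (isOpenU.mem_nhds hp) (fun q hq => D_symm (hH q hq))
    rw [D1_congr hev, D_symm (contDiffAt_D1 (hH p hp))]
  -- step 2 : rewrite via the PDE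
  have h2 : D2 (D1 (D1 H)) p
      = D2 (D2 (D2 H)) p + ((-4 / p.2 ^ 2) * D2 H p + (4 / p.2) * D2 (D2 H) p) := by
    have hev : D1 (D1 H) =ᶠ[nhds p]
        (fun q => D2 (D2 H) q + (fun q : ℝ × ℝ => 4 / q.2) q * D2 H q) :=
      Filter.eventuallyEq_of_mem (isOpenU.mem_nhds hp) (fun q hq => hPDE q hq)
    rw [D2_congr hev]
    have hB : DifferentiableAt ℝ (D2 (D2 H)) p :=
      diffAt (contDiffAt_D2 (contDiffAt_D2 (hH p hp)))
    have hA : DifferentiableAt ℝ (D2 H) p := diffAt (contDiffAt_D2 (hH p hp))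
    have hc : DifferentiableAt ℝ (fun q : ℝ × ℝ => 4 / q.2) p := by
      have h1 : HasDerivAt (fun x : ℝ => (4:ℝ) / x) ((0 * p.2 - 4 * 1) / p.2 ^ 2) p.2 :=
        (hasDerivAt_const p.2 (4:ℝ)).div (hasDerivAt_id p.2) hp'
      have h3 : HasFDerivAt (fun q : ℝ × ℝ => (4:ℝ) / q.2)
          (((0 * p.2 - 4 * 1) / p.2 ^ 2) • ContinuousLinearMap.snd ℝ ℝ ℝ) p :=
        h1.comp_hasFDerivAt p (ContinuousLinearMap.snd ℝ ℝ ℝ).hasFDerivAt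
      exact h3.differentiableAt
    show fderiv ℝ _ p (0, 1) = _
    rw [Dv_add hB (hc.fun_mul hA), Dv_mul hc hA, Dv_div_snd hp']
    simp only [D2]
    ring
  have e1 := D1D1_Phi_eq hH hp
  have e2 := D2D2_Phi_eq hH hp
  rw [e1, e2, h1, h2, hPDE p hp]
  field_simp
  ring


lemma abs_le_of_mem_uIcc {t s : ℝ} (hs : s ∈ uIcc 0 t) : |s| ≤ |t| := by
  rcases mem_uIcc.mp hs with ⟨h1, h2⟩ | ⟨h1, h2⟩
  · rw [abs_of_nonneg h1, abs_of_nonneg (h1.trans h2)]; exact h2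
  · rw [abs_of_nonpos h2, abs_of_nonpos (h1.trans h2)]; linarith

lemma exterior_vanish (R : ℝ) (hR : 0 < R) (H : ℝ × ℝ → ℝ)
    (hH : ∀ q : ℝ × ℝ, 0 < q.2 → ContDiffAt ℝ ∞ H q)
    (hPDE : ∀ q : ℝ × ℝ, 0 < q.2 →
      D1 (D1 H) q = D2 (D2 H) q + (4 / q.2) * D2 H q)
    (hH0 : ∀ r, R ≤ r → H (0, r) = 0)
    (hHt0 : ∀ r, R ≤ r → D1 H (0, r) = 0) :
    ∀ t r, R + |t| ≤ r → H (t, r) = 0 := by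
  -- initial data for Phi
  have hDH0 : ∀ ρ, R < ρ → D2 H (0, ρ) = 0 := by
    intro ρ hρ
    exact D2_eq_of_eventually (diffAt (hH (0, ρ) (hR.trans hρ)))
      (hasDerivAt_const ρ (0:ℝ))
      (Filter.eventuallyEq_of_mem (isOpen_Ioi.mem_nhds hρ)
        (fun x hx => hH0 x (le_of_lt hx)))
  have hD1H0' : ∀ ρ, R < ρ → D2 (D1 H) (0, ρ) = 0 := by
    intro ρ hρ
    exact D2_eq_of_eventually (diffAt (contDiffAt_D1 (hH (0, ρ) (hR.trans hρ))))
      (hasDerivAt_const ρ (0:ℝ))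
      (Filter.eventuallyEq_of_mem (isOpen_Ioi.mem_nhds hρ)
        (fun x hx => hHt0 x (le_of_lt hx)))
  have hPhi0 : ∀ ρ, R < ρ → Phi H (0, ρ) = 0 := by
    intro ρ hρ
    show ((0:ℝ), ρ).2 * ((0:ℝ), ρ).2 * D2 H (0, ρ) + 3 * ((0:ℝ), ρ).2 * H (0, ρ) = 0
    rw [hDH0 ρ hρ, hH0 ρ (le_of_lt hρ)]; ring
  have hD1Phi0 : ∀ ρ, R < ρ → D1 (Phi H) (0, ρ) = 0 := by
    intro ρ hρ
    have h0ρ : (0:ℝ) < ρ := hR.trans hρ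
    rw [D1_Phi_eq (hH _ h0ρ)]
    have h1 : D1 (D2 H) (0, ρ) = 0 := by
      rw [D_symm (hH _ h0ρ)]; exact hD1H0' ρ hρ
    rw [h1, hHt0 ρ (le_of_lt hρ)]; ring
  have hD2Phi0 : ∀ ρ, R < ρ → D2 (Phi H) (0, ρ) = 0 := by
    intro ρ hρ
    exact D2_eq_of_eventually (diffAt (contDiffAt_Phi (hH _ (hR.trans hρ))))
      (hasDerivAt_const ρ (0:ℝ))
      (Filter.eventuallyEq_of_mem (isOpen_Ioi.mem_nhds hρ) (fun x hx => hPhi0 x hx))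
  -- transport along characteristics
  have key : ∀ t r : ℝ, R + |t| < r →
      D1 (Phi H) (t, r) = 0 ∧ D2 (Phi H) (t, r) = 0 := by
    intro t r htr
    have hseg : ∀ s ∈ uIcc 0 t, R < r + t - s ∧ R < r - t + s := by
      intro s hs
      rcases mem_uIcc.mp hs with ⟨h1, h2⟩ | ⟨h1, h2⟩
      · have habs : |t| = t := abs_of_nonneg (h1.trans h2)
        constructor <;> [skip; skip] <;> rw [habs] at htr <;> linarith
      · have habs : |t| = -t := abs_of_nonpos (h1.trans h2)
        constructor <;> [skip; skip] <;> rw [habs] at htr <;> linarith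
    have hgrad0 : ∀ q : ℝ × ℝ, 0 < q.2 →
        (fderiv ℝ (fun p => D1 (Phi H) p + D2 (Phi H) p) q (1, -1) = 0 ∧
         fderiv ℝ (fun p => D1 (Phi H) p - D2 (Phi H) p) q (1, 1) = 0) := by
      intro q hq
      have hΦq : ContDiffAt ℝ ∞ (Phi H) q := contDiffAt_Phi (hH q hq)
      have hd1 : DifferentiableAt ℝ (D1 (Phi H)) q := diffAt (contDiffAt_D1 hΦq)
      have hd2 : DifferentiableAt ℝ (D2 (Phi H)) q := diffAt (contDiffAt_D2 hΦq)
      have hv1 : ((1:ℝ), (-1:ℝ)) = ((1:ℝ), (0:ℝ)) - ((0:ℝ), (1:ℝ)) := by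
        simp [Prod.ext_iff]
      have hv2 : ((1:ℝ), (1:ℝ)) = ((1:ℝ), (0:ℝ)) + ((0:ℝ), (1:ℝ)) := by
        simp [Prod.ext_iff]
      have hwave := wave_Phi hH hPDE hq
      have hsym := D_symm hΦq
      constructor
      · rw [Dv_add hd1 hd2, hv1, map_sub, map_sub]
        show D1 (D1 (Phi H)) q - D2 (D1 (Phi H)) q
          + (D1 (D2 (Phi H)) q - D2 (D2 (Phi H)) q) = 0
        rw [hwave, hsym]; ring
      · rw [Dv_sub hd1 hd2, hv2, map_add, map_add]
        show D1 (D1 (Phi H)) q + D2 (D1 (Phi H)) q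
          - (D1 (D2 (Phi H)) q + D2 (D2 (Phi H)) q) = 0
        rw [hwave, hsym]; ring
    -- P-transport
    have hP : D1 (Phi H) (t, r) + D2 (Phi H) (t, r)
        = D1 (Phi H) (0, r + t) + D2 (Phi H) (0, r + t) := by
      have h := eq_of_hasDerivAt_zero_uIcc
        (f := fun s => D1 (Phi H) (s, r + t - s) + D2 (Phi H) (s, r + t - s))
        (t := t) ?_
      · rw [show r + t - t = r by ring, show r + t - 0 = r + t by ring] at h
        exact h
      · intro s hs
        obtain ⟨hq1, _⟩ := hseg s hs
        have hq : (0:ℝ) < r + t - s := hR.trans hq1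
        have hΦq : ContDiffAt ℝ ∞ (Phi H) (s, r + t - s) := contDiffAt_Phi (hH _ hq)
        have hline : HasDerivAt (fun s' : ℝ => (s', r + t - s')) ((1:ℝ), (-1:ℝ)) s := by
          have := (hasDerivAt_id s).prodMk ((hasDerivAt_id s).const_sub (r + t))
          simpa using this
        have hd : DifferentiableAt ℝ (fun p => D1 (Phi H) p + D2 (Phi H) p)
            (s, r + t - s) :=
          (diffAt (contDiffAt_D1 hΦq)).add (diffAt (contDiffAt_D2 hΦq))
        have hF := hd.hasFDerivAt.comp_hasDerivAt s hline
        rw [(hgrad0 (s, r + t - s) hq).1] at hF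
        exact hF
    -- Q-transport
    have hQ : D1 (Phi H) (t, r) - D2 (Phi H) (t, r)
        = D1 (Phi H) (0, r - t) - D2 (Phi H) (0, r - t) := by
      have h := eq_of_hasDerivAt_zero_uIcc
        (f := fun s => D1 (Phi H) (s, r - t + s) - D2 (Phi H) (s, r - t + s))
        (t := t) ?_
      · rw [show r - t + t = r by ring, show r - t + 0 = r - t by ring] at h
        exact h
      · intro s hs
        obtain ⟨_, hq1⟩ := hseg s hs
        have hq : (0:ℝ) < r - t + s := hR.trans hq1
        have hΦq : ContDiffAt ℝ ∞ (Phi H) (s, r - t + s) := contDiffAt_Phi (hH _ hq)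
        have hline : HasDerivAt (fun s' : ℝ => (s', r - t + s')) ((1:ℝ), (1:ℝ)) s := by
          have := (hasDerivAt_id s).prodMk ((hasDerivAt_id s).const_add (r - t))
          simpa using this
        have hd : DifferentiableAt ℝ (fun p => D1 (Phi H) p - D2 (Phi H) p)
            (s, r - t + s) :=
          (diffAt (contDiffAt_D1 hΦq)).sub (diffAt (contDiffAt_D2 hΦq))
        have hF := hd.hasFDerivAt.comp_hasDerivAt s hline
        rw [(hgrad0 (s, r - t + s) hq).2] at hF
        exact hF
    have hrt1 : R < r + t := by have := neg_abs_le t; linarith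
    have hrt2 : R < r - t := by have := le_abs_self t; linarith
    have e1 := hD1Phi0 (r + t) hrt1
    have e2 := hD2Phi0 (r + t) hrt1
    have e3 := hD1Phi0 (r - t) hrt2
    have e4 := hD2Phi0 (r - t) hrt2
    constructor <;> [skip; skip] <;>
      [linarith [hP, hQ, e1, e2, e3, e4]; linarith [hP, hQ, e1, e2, e3, e4]]
  -- Phi vanishes strictly outside the cone
  have hPhiext : ∀ t r : ℝ, R + |t| < r → Phi H (t, r) = 0 := by
    intro t r htr
    have h := eq_of_hasDerivAt_zero_uIcc (f := fun s => Phi H (s, r)) (t := t) ?_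
    · rw [h]; exact hPhi0 r (by have := abs_nonneg t; linarith)
    · intro s hs
      have hsr : R + |s| < r := by have := abs_le_of_mem_uIcc hs; linarith
      have hrpos : (0:ℝ) < r := by have := abs_nonneg s; linarith
      have h1 : HasDerivAt (fun s' => Phi H (s', r)) (D1 (Phi H) (s, r)) s :=
        hasDerivAt_slice1 (diffAt (contDiffAt_Phi (hH (s, r) hrpos)))
      rw [(key s r hsr).1] at h1
      exact h1
  -- main strict statement
  have main : ∀ t r : ℝ, R + |t| < r → H (t, r) = 0 := by
    intro t₀ r₀ h₀
    have hr₀R : R < r₀ := by have := abs_nonneg t₀; linarith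
    have hr₀pos : (0:ℝ) < r₀ := hR.trans hr₀R
    have hr₀0 : r₀ ≠ 0 := ne_of_gt hr₀pos
    -- ρ³ H(s,ρ) is constant in ρ outside the cone
    have hscale : ∀ s ρ : ℝ, R + |s| < r₀ → R + |s| < ρ →
        ρ ^ 3 * H (s, ρ) = r₀ ^ 3 * H (s, r₀) := by
      intro s ρ hs hρ
      have hk : ∀ x, R + |s| < x → HasDerivAt (fun x' => x' ^ 3 * H (s, x')) 0 x := by
        intro x hx
        have hxpos : (0:ℝ) < x := by have := abs_nonneg s; linarith
        have h1 : HasDerivAt (fun x' => H (s, x')) (D2 H (s, x)) x :=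
          hasDerivAt_slice2 (diffAt (hH (s, x) hxpos))
        have h2 : HasDerivAt (fun x' : ℝ => x' ^ 3) (3 * x ^ 2) x := by
          simpa using hasDerivAt_pow 3 x
        have h3 := h2.mul h1
        convert! h3 using 1
        have hphi := hPhiext s x hx
        have hphi' : x * x * D2 H (s, x) + 3 * x * H (s, x) = 0 := hphi
        linear_combination (-x) * hphi'
      rcases le_total ρ r₀ with hle | hle
      · exact (eq_of_hasDerivAt_zero_Icc hle
          (fun x hx => hk x (lt_of_lt_of_le hρ hx.1))).symm
      · exact eq_of_hasDerivAt_zero_Icc hle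
          (fun x hx => hk x (lt_of_lt_of_le hs hx.1))
    -- the time-derivative of H at (s, r₀) has vanishing time-derivative
    have hc1 : ∀ s, R + |s| < r₀ → D1 (D1 H) (s, r₀) = 0 := by
      intro s hs
      set C : ℝ := r₀ ^ 3 * H (s, r₀) with hC
      have hHval : ∀ ρ, R + |s| < ρ → H (s, ρ) = C * ρ ^ (-3 : ℤ) := by
        intro ρ hρ
        have hρpos : (0:ℝ) < ρ := by have := abs_nonneg s; linarith
        have hρ0 : ρ ≠ 0 := ne_of_gt hρpos
        have h := hscale s ρ hs hρ
        rw [zpow_neg, ← hC] at *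
        have h3 : (ρ:ℝ) ^ (3:ℤ) = ρ ^ (3:ℕ) := by norm_cast
        rw [h3]
        field_simp
        linarith [h]
      have hD2val : ∀ ρ, R + |s| < ρ → D2 H (s, ρ) = C * (-3) * ρ ^ (-4 : ℤ) := by
        intro ρ hρ
        have hρpos : (0:ℝ) < ρ := by have := abs_nonneg s; linarith
        have hρ0 : ρ ≠ 0 := ne_of_gt hρpos
        apply D2_eq_of_eventually (diffAt (hH (s, ρ) hρpos))
          (g := fun x => C * x ^ (-3 : ℤ))
        · have := (hasDerivAt_zpow (-3) ρ (Or.inl hρ0)).const_mul C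
          convert! this using 1
          push_cast
          ring
        · exact Filter.eventuallyEq_of_mem (isOpen_Ioi.mem_nhds hρ)
            (fun x hx => hHval x hx)
      have hD2D2 : D2 (D2 H) (s, r₀) = C * 12 * r₀ ^ (-5 : ℤ) := by
        apply D2_eq_of_eventually (diffAt (contDiffAt_D2 (hH (s, r₀) hr₀pos)))
          (g := fun x => C * (-3) * x ^ (-4 : ℤ))
        · have := (hasDerivAt_zpow (-4) r₀ (Or.inl hr₀0)).const_mul (C * (-3))
          convert! this using 1
          push_cast
          ring
        · exact Filter.eventuallyEq_of_mem (isOpen_Ioi.mem_nhds hs)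
            (fun x hx => hD2val x hx)
      rw [hPDE (s, r₀) hr₀pos]
      have hd2 := hD2val r₀ hs
      show D2 (D2 H) (s, r₀) + (4 / (s, r₀).2) * D2 H (s, r₀) = 0
      rw [hD2D2, hd2]
      show C * 12 * r₀ ^ (-5 : ℤ) + 4 / r₀ * (C * (-3) * r₀ ^ (-4 : ℤ)) = 0
      rw [zpow_neg, zpow_neg]
      have h4 : (r₀:ℝ) ^ (4:ℤ) = r₀ ^ (4:ℕ) := by norm_cast
      have h5 : (r₀:ℝ) ^ (5:ℤ) = r₀ ^ (5:ℕ) := by norm_cast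
      rw [h4, h5]
      field_simp
      ring
    -- D1 H vanishes on the strip
    have hc1zero : ∀ s, R + |s| < r₀ → D1 H (s, r₀) = 0 := by
      intro s hs
      have heq : D1 H (s, r₀) = D1 H (0, r₀) := by
        apply eq_of_hasDerivAt_zero_uIcc (f := fun σ => D1 H (σ, r₀)) (t := s)
        intro σ hσ
        have hσs : R + |σ| < r₀ := by have := abs_le_of_mem_uIcc hσ; linarith
        have h1 : HasDerivAt (fun σ' => D1 H (σ', r₀)) (D1 (D1 H) (σ, r₀)) σ :=
          hasDerivAt_slice1 (diffAt (contDiffAt_D1 (hH (σ, r₀) hr₀pos)))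
        rw [hc1 σ hσs] at h1
        exact h1
      rw [heq]
      exact hHt0 r₀ (le_of_lt hr₀R)
    have heq : H (t₀, r₀) = H (0, r₀) := by
      apply eq_of_hasDerivAt_zero_uIcc (f := fun σ => H (σ, r₀)) (t := t₀)
      intro σ hσ
      have hσs : R + |σ| < r₀ := by have := abs_le_of_mem_uIcc hσ; linarith
      have h1 : HasDerivAt (fun σ' => H (σ', r₀)) (D1 H (σ, r₀)) σ :=
        hasDerivAt_slice1 (diffAt (hH (σ, r₀) hr₀pos))
      rw [hc1zero σ hσs] at h1
      exact h1
    rw [heq]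
    exact hH0 r₀ (le_of_lt hr₀R)
  -- boundary case by continuity
  intro t r htr
  rcases eq_or_lt_of_le htr with heq | hlt
  · have hrpos : (0:ℝ) < r := by have := abs_nonneg t; linarith
    have hcont : ContinuousAt (fun ρ => H (t, ρ)) r :=
      (diffAt (hH (t, r) hrpos)).continuousAt.comp
        (continuousAt_const.prodMk continuousAt_id)
    have h1 : Filter.Tendsto (fun ρ => H (t, ρ)) (nhdsWithin r (Ioi r))
        (nhds (H (t, r))) := hcont.tendsto.mono_left nhdsWithin_le_nhds
    have h2 : Filter.Tendsto (fun ρ => H (t, ρ)) (nhdsWithin r (Ioi r)) (nhds 0) := by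
      apply Filter.Tendsto.congr' _ tendsto_const_nhds
      exact Filter.eventuallyEq_of_mem self_mem_nhdsWithin
        (fun ρ hρ => (main t ρ (heq ▸ hρ)).symm)
    exact tendsto_nhds_unique h1 h2
  · exact main t r hlt


-- static solutions
lemma hasFDerivAt_snd_comp {q : ℝ × ℝ} {f : ℝ → ℝ} {f' : ℝ}
    (h : HasDerivAt f f' q.2) :
    HasFDerivAt (fun p : ℝ × ℝ => f p.2) (f' • ContinuousLinearMap.snd ℝ ℝ ℝ) q :=
  h.comp_hasFDerivAt q (ContinuousLinearMap.snd ℝ ℝ ℝ).hasFDerivAt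

lemma D1_snd_comp {q : ℝ × ℝ} {f : ℝ → ℝ} {f' : ℝ} (h : HasDerivAt f f' q.2) :
    D1 (fun p : ℝ × ℝ => f p.2) q = 0 := by
  have := (hasFDerivAt_snd_comp h).fderiv
  show fderiv ℝ (fun p : ℝ × ℝ => f p.2) q (1, 0) = 0
  rw [this]; simp

lemma D2_snd_comp {q : ℝ × ℝ} {f : ℝ → ℝ} {f' : ℝ} (h : HasDerivAt f f' q.2) :
    D2 (fun p : ℝ × ℝ => f p.2) q = f' := by
  have := (hasFDerivAt_snd_comp h).fderiv
  show fderiv ℝ (fun p : ℝ × ℝ => f p.2) q (0, 1) = f'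
  rw [this]; simp

lemma hasDerivAt_negthree {x : ℝ} (hx : 0 < x) :
    HasDerivAt (fun y : ℝ => y ^ (-3:ℝ)) (-3 * x ^ (-4:ℝ)) x := by
  have := Real.hasDerivAt_rpow_const (x := x) (p := (-3:ℝ)) (Or.inl (ne_of_gt hx))
  convert this using 1
  norm_num

lemma hasDerivAt_negfour {x : ℝ} (hx : 0 < x) :
    HasDerivAt (fun y : ℝ => -3 * y ^ (-4:ℝ)) (12 * x ^ (-5:ℝ)) x := by
  have := (Real.hasDerivAt_rpow_const (x := x) (p := (-4:ℝ))
    (Or.inl (ne_of_gt hx))).const_mul (-3:ℝ)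
  convert! this using 1
  norm_num
  ring

lemma rpow_harmonic {x : ℝ} (hx : 0 < x) :
    12 * x ^ (-5:ℝ) + (4 / x) * (-3 * x ^ (-4:ℝ)) = 0 := by
  have h1 : x ^ (-5:ℝ) = x⁻¹ * x ^ (-4:ℝ) := by
    rw [← Real.rpow_neg_one x, ← Real.rpow_add hx]
    norm_num
  rw [h1]
  have hx0 : x ≠ 0 := ne_of_gt hx
  field_simp
  ring

def Fw : ℝ × ℝ → ℝ := fun p => p.2 ^ (-3:ℝ)
def Fv : ℝ × ℝ → ℝ := fun p => p.1 * p.2 ^ (-3:ℝ)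

lemma contDiffAt_Fw {q : ℝ × ℝ} (hq : 0 < q.2) : ContDiffAt ℝ ∞ Fw q :=
  (Real.contDiffAt_rpow_const_of_ne (ne_of_gt hq)).comp q contDiffAt_snd

lemma contDiffAt_Fv {q : ℝ × ℝ} (hq : 0 < q.2) : ContDiffAt ℝ ∞ Fv q :=
  contDiffAt_fst.mul (contDiffAt_Fw hq)

lemma D1_Fw {q : ℝ × ℝ} (hq : 0 < q.2) : D1 Fw q = 0 :=
  D1_snd_comp (hasDerivAt_negthree hq)

lemma D2_Fw {q : ℝ × ℝ} (hq : 0 < q.2) : D2 Fw q = -3 * q.2 ^ (-4:ℝ) :=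
  D2_snd_comp (hasDerivAt_negthree hq)

lemma pde_Fw : ∀ q : ℝ × ℝ, 0 < q.2 →
    D1 (D1 Fw) q = D2 (D2 Fw) q + (4 / q.2) * D2 Fw q := by
  intro q hq
  have h1 : D1 (D1 Fw) q = 0 := by
    have hev : D1 Fw =ᶠ[nhds q] (fun _ => (0:ℝ)) :=
      Filter.eventuallyEq_of_mem (isOpenU.mem_nhds hq) (fun x hx => D1_Fw hx)
    rw [D1_congr hev]
    show fderiv ℝ (fun _ : ℝ × ℝ => (0:ℝ)) q (1, 0) = 0
    rw [fderiv_fun_const]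
    simp
  have h2 : D2 (D2 Fw) q = 12 * q.2 ^ (-5:ℝ) := by
    apply D2_eq_of_eventually (diffAt (contDiffAt_D2 (contDiffAt_Fw hq)))
      (g := fun y => -3 * y ^ (-4:ℝ)) (hasDerivAt_negfour hq)
    refine Filter.eventuallyEq_of_mem (isOpen_Ioi.mem_nhds hq) (fun x hx => ?_)
    exact D2_Fw (q := (q.1, x)) hx
  rw [h1, h2, D2_Fw hq, rpow_harmonic hq]

lemma D1_Fv {q : ℝ × ℝ} (hq : 0 < q.2) : D1 Fv q = q.2 ^ (-3:ℝ) := by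
  have hfst : DifferentiableAt ℝ (fun p : ℝ × ℝ => p.1) q := differentiableAt_fst
  have hFw : DifferentiableAt ℝ Fw q := diffAt (contDiffAt_Fw hq)
  show fderiv ℝ (fun p => (fun p : ℝ × ℝ => p.1) p * Fw p) q (1, 0) = _
  rw [Dv_mul hfst hFw, Dv_fst]
  have h0 : fderiv ℝ Fw q (1, 0) = 0 := D1_Fw hq
  rw [h0]
  simp [Fw]

lemma D2_Fv {q : ℝ × ℝ} (hq : 0 < q.2) : D2 Fv q = q.1 * (-3 * q.2 ^ (-4:ℝ)) := by
  have hfst : DifferentiableAt ℝ (fun p : ℝ × ℝ => p.1) q := differentiableAt_fst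
  have hFw : DifferentiableAt ℝ Fw q := diffAt (contDiffAt_Fw hq)
  show fderiv ℝ (fun p => (fun p : ℝ × ℝ => p.1) p * Fw p) q (0, 1) = _
  rw [Dv_mul hfst hFw, Dv_fst]
  have h0 : fderiv ℝ Fw q (0, 1) = -3 * q.2 ^ (-4:ℝ) := D2_Fw hq
  rw [h0]
  simp [Fw]

lemma pde_Fv : ∀ q : ℝ × ℝ, 0 < q.2 →
    D1 (D1 Fv) q = D2 (D2 Fv) q + (4 / q.2) * D2 Fv q := by
  intro q hq
  have h1 : D1 (D1 Fv) q = 0 := by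
    have hev : D1 Fv =ᶠ[nhds q] Fw :=
      Filter.eventuallyEq_of_mem (isOpenU.mem_nhds hq) (fun x hx => D1_Fv hx)
    rw [D1_congr hev]
    exact D1_Fw hq
  have h2 : D2 (D2 Fv) q = q.1 * (12 * q.2 ^ (-5:ℝ)) := by
    have hev : D2 Fv =ᶠ[nhds q]
        (fun p => (fun p : ℝ × ℝ => p.1) p * (fun p : ℝ × ℝ => -3 * p.2 ^ (-4:ℝ)) p) :=
      Filter.eventuallyEq_of_mem (isOpenU.mem_nhds hq) (fun x hx => D2_Fv hx)
    rw [D2_congr hev]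
    have hfst : DifferentiableAt ℝ (fun p : ℝ × ℝ => p.1) q := differentiableAt_fst
    have hg : DifferentiableAt ℝ (fun p : ℝ × ℝ => -3 * p.2 ^ (-4:ℝ)) q :=
      ((Real.contDiffAt_rpow_const_of_ne (n := ∞) (ne_of_gt hq)).comp q
        contDiffAt_snd).differentiableAt (by norm_num) |>.const_mul (-3)
    show fderiv ℝ _ q (0, 1) = _
    rw [Dv_mul hfst hg, Dv_fst]
    have hD2g : fderiv ℝ (fun p : ℝ × ℝ => -3 * p.2 ^ (-4:ℝ)) q (0, 1)
        = 12 * q.2 ^ (-5:ℝ) := by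
      have := (hasFDerivAt_snd_comp (q := q) (hasDerivAt_negfour hq)).fderiv
      rw [this]; simp
    rw [hD2g]
    show 0 * _ + _ = _
    ring
  rw [h1, h2, D2_Fv hq]
  linear_combination (-q.1) * rpow_harmonic hq


lemma pde_sub {W F : ℝ × ℝ → ℝ}
    (hW : ∀ q : ℝ × ℝ, 0 < q.2 → ContDiffAt ℝ ∞ W q)
    (hF : ∀ q : ℝ × ℝ, 0 < q.2 → ContDiffAt ℝ ∞ F q)
    (hPW : ∀ q : ℝ × ℝ, 0 < q.2 → D1 (D1 W) q = D2 (D2 W) q + (4 / q.2) * D2 W q)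
    (hPF : ∀ q : ℝ × ℝ, 0 < q.2 → D1 (D1 F) q = D2 (D2 F) q + (4 / q.2) * D2 F q) :
    ∀ q : ℝ × ℝ, 0 < q.2 →
      D1 (D1 (fun p => W p - F p)) q
        = D2 (D2 (fun p => W p - F p)) q + (4 / q.2) * D2 (fun p => W p - F p) q := by
  have hsub1 : ∀ q : ℝ × ℝ, 0 < q.2 →
      D1 (fun p => W p - F p) q = D1 W q - D1 F q :=
    fun q hq => Dv_sub (diffAt (hW q hq)) (diffAt (hF q hq))
  have hsub2 : ∀ q : ℝ × ℝ, 0 < q.2 →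
      D2 (fun p => W p - F p) q = D2 W q - D2 F q :=
    fun q hq => Dv_sub (diffAt (hW q hq)) (diffAt (hF q hq))
  intro q hq
  have h11 : D1 (D1 (fun p => W p - F p)) q = D1 (D1 W) q - D1 (D1 F) q := by
    have hev : D1 (fun p => W p - F p) =ᶠ[nhds q] (fun p => D1 W p - D1 F p) :=
      Filter.eventuallyEq_of_mem (isOpenU.mem_nhds hq) (fun x hx => hsub1 x hx)
    rw [D1_congr hev]
    exact Dv_sub (diffAt (contDiffAt_D1 (hW q hq))) (diffAt (contDiffAt_D1 (hF q hq)))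
  have h22 : D2 (D2 (fun p => W p - F p)) q = D2 (D2 W) q - D2 (D2 F) q := by
    have hev : D2 (fun p => W p - F p) =ᶠ[nhds q] (fun p => D2 W p - D2 F p) :=
      Filter.eventuallyEq_of_mem (isOpenU.mem_nhds hq) (fun x hx => hsub2 x hx)
    rw [D2_congr hev]
    exact Dv_sub (diffAt (contDiffAt_D2 (hW q hq))) (diffAt (contDiffAt_D2 (hF q hq)))
  rw [h11, h22, hsub2 q hq, hPW q hq, hPF q hq]
  ring

/-- Conversion of the iterated-`deriv` wave equation to `D`-form. -/
lemma pde_D_form {w : ℝ → ℝ → ℝ}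
    (hw : ∀ q : ℝ × ℝ, 0 < q.2 → ContDiffAt ℝ ∞ (fun p : ℝ × ℝ => w p.1 p.2) q)
    (hweq : ∀ t : ℝ, ∀ r > (0:ℝ),
      deriv (fun s => deriv (fun s' => w s' r) s) t -
        deriv (fun ρ => deriv (fun ρ' => w t ρ') ρ) r - (4/r) * deriv (w t) r = 0) :
    ∀ q : ℝ × ℝ, 0 < q.2 →
      D1 (D1 (fun p : ℝ × ℝ => w p.1 p.2)) q
        = D2 (D2 (fun p : ℝ × ℝ => w p.1 p.2)) q
          + (4 / q.2) * D2 (fun p : ℝ × ℝ => w p.1 p.2) q := by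
  set W : ℝ × ℝ → ℝ := fun p => w p.1 p.2 with hW
  intro q hq
  obtain ⟨t, r⟩ := q
  simp only at hq
  have hr : (0:ℝ) < r := hq
  -- first space derivative
  have hsp : ∀ t' : ℝ, deriv (w t') r = D2 W (t', r) := by
    intro t'
    exact (hasDerivAt_slice2 (p := (t', r)) (diffAt (hw (t', r) hr))).deriv
  -- second space derivative
  have hspp : deriv (fun ρ => deriv (fun ρ' => w t ρ') ρ) r = D2 (D2 W) (t, r) := by
    have hev : (fun ρ => deriv (fun ρ' => w t ρ') ρ) =ᶠ[nhds r]
        (fun ρ => D2 W (t, ρ)) := by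
      refine Filter.eventuallyEq_of_mem (isOpen_Ioi.mem_nhds hr) (fun x hx => ?_)
      exact (hasDerivAt_slice2 (p := (t, x)) (diffAt (hw (t, x) hx))).deriv
    rw [hev.deriv_eq]
    exact (hasDerivAt_slice2 (p := (t, r)) (diffAt (contDiffAt_D2 (hw (t, r) hr)))).deriv
  -- second time derivative
  have htt : deriv (fun s => deriv (fun s' => w s' r) s) t = D1 (D1 W) (t, r) := by
    have heq : (fun s => deriv (fun s' => w s' r) s) = (fun s => D1 W (s, r)) := by
      funext s
      exact (hasDerivAt_slice1 (p := (s, r)) (diffAt (hw (s, r) hr))).deriv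
    rw [heq]
    exact (hasDerivAt_slice1 (p := (t, r)) (diffAt (contDiffAt_D1 (hw (t, r) hr)))).deriv
  have h := hweq t r hr
  rw [htt, hspp, hsp t] at h
  show D1 (D1 W) (t, r) = D2 (D2 W) (t, r) + (4 / r) * D2 W (t, r)
  linarith


lemma w_cone (R : ℝ) (hR : 0 < R) (w : ℝ → ℝ → ℝ)
    (hw : ContDiffOn ℝ (⊤ : ℕ∞) (fun p : ℝ × ℝ => w p.1 p.2) {p : ℝ × ℝ | 0 < p.2})
    (hweq : ∀ t : ℝ, ∀ r > (0:ℝ),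
      deriv (fun s => deriv (fun s' => w s' r) s) t -
        deriv (fun ρ => deriv (fun ρ' => w t ρ') ρ) r - (4/r) * deriv (w t) r = 0)
    (hw0 : ∀ r ≥ R, w 0 r = r ^ (-3:ℝ))
    (hwt0 : ∀ r ≥ R, deriv (fun t => w t r) 0 = 0) :
    ∀ t r : ℝ, R + |t| ≤ r → w t r = r ^ (-3:ℝ) := by
  have hWsm : ∀ q : ℝ × ℝ, 0 < q.2 → ContDiffAt ℝ ∞ (fun p : ℝ × ℝ => w p.1 p.2) q :=
    fun q hq => (hw.contDiffAt (isOpenU.mem_nhds hq)).of_le (by simp)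
  have hPDEW := pde_D_form hWsm hweq
  have hHsm : ∀ q : ℝ × ℝ, 0 < q.2 →
      ContDiffAt ℝ ∞ (fun p : ℝ × ℝ => (fun p : ℝ × ℝ => w p.1 p.2) p - Fw p) q :=
    fun q hq => (hWsm q hq).sub (contDiffAt_Fw hq)
  have hPDEH := pde_sub hWsm (fun q hq => contDiffAt_Fw hq) hPDEW pde_Fw
  have hH0 : ∀ r, R ≤ r →
      (fun p : ℝ × ℝ => (fun p : ℝ × ℝ => w p.1 p.2) p - Fw p) (0, r) = 0 := by
    intro r hr
    show w 0 r - r ^ (-3:ℝ) = 0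
    rw [hw0 r hr]; ring
  have hHt0 : ∀ r, R ≤ r →
      D1 (fun p : ℝ × ℝ => (fun p : ℝ × ℝ => w p.1 p.2) p - Fw p) (0, r) = 0 := by
    intro r hr
    have hrpos : (0:ℝ) < r := lt_of_lt_of_le hR hr
    have hsub : D1 (fun p : ℝ × ℝ => (fun p : ℝ × ℝ => w p.1 p.2) p - Fw p) (0, r)
        = D1 (fun p : ℝ × ℝ => w p.1 p.2) (0, r) - D1 Fw (0, r) :=
      Dv_sub (diffAt (hWsm (0, r) hrpos)) (diffAt (contDiffAt_Fw hrpos))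
    rw [hsub, D1_Fw (q := ((0:ℝ), r)) hrpos]
    have hW1 : D1 (fun p : ℝ × ℝ => w p.1 p.2) (0, r) = deriv (fun t => w t r) 0 :=
      ((hasDerivAt_slice1 (p := ((0:ℝ), r)) (diffAt (hWsm (0, r) hrpos))).deriv).symm
    rw [hW1, hwt0 r hr]; ring
  have hvan := exterior_vanish R hR _ hHsm hPDEH hH0 hHt0
  intro t r htr
  have h : w t r - r ^ (-3:ℝ) = 0 := hvan t r htr
  linarith

lemma v_cone (R : ℝ) (hR : 0 < R) (v : ℝ → ℝ → ℝ)
    (hv : ContDiffOn ℝ (⊤ : ℕ∞) (fun p : ℝ × ℝ => v p.1 p.2) {p : ℝ × ℝ | 0 < p.2})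
    (hveq : ∀ t : ℝ, ∀ r > (0:ℝ),
      deriv (fun s => deriv (fun s' => v s' r) s) t -
        deriv (fun ρ => deriv (fun ρ' => v t ρ') ρ) r - (4/r) * deriv (v t) r = 0)
    (hv0 : ∀ r ≥ R, v 0 r = 0)
    (hvt0 : ∀ r ≥ R, deriv (fun t => v t r) 0 = r ^ (-3:ℝ)) :
    ∀ t r : ℝ, R + |t| ≤ r → v t r = t * r ^ (-3:ℝ) := by
  have hWsm : ∀ q : ℝ × ℝ, 0 < q.2 → ContDiffAt ℝ ∞ (fun p : ℝ × ℝ => v p.1 p.2) q :=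
    fun q hq => (hv.contDiffAt (isOpenU.mem_nhds hq)).of_le (by simp)
  have hPDEW := pde_D_form hWsm hveq
  have hHsm : ∀ q : ℝ × ℝ, 0 < q.2 →
      ContDiffAt ℝ ∞ (fun p : ℝ × ℝ => (fun p : ℝ × ℝ => v p.1 p.2) p - Fv p) q :=
    fun q hq => (hWsm q hq).sub (contDiffAt_Fv hq)
  have hPDEH := pde_sub hWsm (fun q hq => contDiffAt_Fv hq) hPDEW pde_Fv
  have hH0 : ∀ r, R ≤ r →
      (fun p : ℝ × ℝ => (fun p : ℝ × ℝ => v p.1 p.2) p - Fv p) (0, r) = 0 := by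
    intro r hr
    show v 0 r - 0 * r ^ (-3:ℝ) = 0
    rw [hv0 r hr]; ring
  have hHt0 : ∀ r, R ≤ r →
      D1 (fun p : ℝ × ℝ => (fun p : ℝ × ℝ => v p.1 p.2) p - Fv p) (0, r) = 0 := by
    intro r hr
    have hrpos : (0:ℝ) < r := lt_of_lt_of_le hR hr
    have hsub : D1 (fun p : ℝ × ℝ => (fun p : ℝ × ℝ => v p.1 p.2) p - Fv p) (0, r)
        = D1 (fun p : ℝ × ℝ => v p.1 p.2) (0, r) - D1 Fv (0, r) :=
      Dv_sub (diffAt (hWsm (0, r) hrpos)) (diffAt (contDiffAt_Fv hrpos))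
    rw [hsub, D1_Fv (q := ((0:ℝ), r)) hrpos]
    have hW1 : D1 (fun p : ℝ × ℝ => v p.1 p.2) (0, r) = deriv (fun t => v t r) 0 :=
      ((hasDerivAt_slice1 (p := ((0:ℝ), r)) (diffAt (hWsm (0, r) hrpos))).deriv).symm
    rw [hW1, hvt0 r hr]
    show r ^ (-3:ℝ) - ((0:ℝ), r).2 ^ (-3:ℝ) = 0
    ring
  have hvan := exterior_vanish R hR _ hHsm hPDEH hH0 hHt0
  intro t r htr
  have h : v t r - t * r ^ (-3:ℝ) = 0 := hvan t r htr
  linarith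


lemma w_energy (R : ℝ) (hR : 0 < R) (w : ℝ → ℝ → ℝ)
    (hcone : ∀ t r : ℝ, R + |t| ≤ r → w t r = r ^ (-3:ℝ)) (t : ℝ) :
    ∫ r in Ioi (R + |t|), ((deriv (fun s => w s r) t)^2 + (deriv (w t) r)^2) * r^4
      = 3 * (R + |t|) ^ (-3:ℝ) := by
  set a := R + |t| with ha
  have hapos : (0:ℝ) < a := by have := abs_nonneg t; simp only [ha]; linarith
  have hcongr : ∀ r ∈ Ioi a,
      ((deriv (fun s => w s r) t)^2 + (deriv (w t) r)^2) * r^4 = 9 * r ^ (-4:ℝ) := by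
    intro r hr
    have hr' : a < r := hr
    have hrpos : (0:ℝ) < r := lt_trans hapos hr'
    have h1 : deriv (fun s => w s r) t = 0 := by
      have hopen : IsOpen {s : ℝ | R + |s| < r} :=
        isOpen_lt (continuous_const.add continuous_abs) continuous_const
      have hev : (fun s => w s r) =ᶠ[nhds t] (fun _ => r ^ (-3:ℝ)) :=
        Filter.eventuallyEq_of_mem (hopen.mem_nhds hr')
          (fun s hs => hcone s r (le_of_lt hs))
      rw [hev.deriv_eq, deriv_const]
    have h2 : deriv (w t) r = -3 * r ^ (-4:ℝ) := by
      have hev : (w t) =ᶠ[nhds r] (fun ρ => ρ ^ (-3:ℝ)) :=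
        Filter.eventuallyEq_of_mem (isOpen_Ioi.mem_nhds hr')
          (fun ρ hρ => hcone t ρ (le_of_lt hρ))
      rw [hev.deriv_eq]
      exact (hasDerivAt_negthree hrpos).deriv
    rw [h1, h2]
    have e4 : (r ^ (-4:ℝ))^2 = r ^ (-8:ℝ) := by
      rw [sq, ← Real.rpow_add hrpos]; norm_num
    have e5 : ((0:ℝ)^2 + (-3 * r ^ (-4:ℝ))^2) * r^4
        = 9 * (r ^ (-8:ℝ) * r ^ ((4:ℕ):ℝ)) := by
      rw [← e4, ← Real.rpow_natCast r 4]; ring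
    rw [e5, ← Real.rpow_add hrpos]
    norm_num
  rw [setIntegral_congr_fun measurableSet_Ioi hcongr, integral_const_mul _ _,
    integral_Ioi_rpow_of_lt (by norm_num) hapos]
  norm_num
  ring

lemma v_energy (R : ℝ) (hR : 0 < R) (v : ℝ → ℝ → ℝ)
    (hcone : ∀ t r : ℝ, R + |t| ≤ r → v t r = t * r ^ (-3:ℝ)) (t : ℝ) :
    ∫ r in Ioi (R + |t|), ((deriv (fun s => v s r) t)^2 + (deriv (v t) r)^2) * r^4
      = (R + |t|) ^ (-1:ℝ) + 3 * t^2 * (R + |t|) ^ (-3:ℝ) := by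
  set a := R + |t| with ha
  have hapos : (0:ℝ) < a := by have := abs_nonneg t; simp only [ha]; linarith
  have hcongr : ∀ r ∈ Ioi a,
      ((deriv (fun s => v s r) t)^2 + (deriv (v t) r)^2) * r^4
        = r ^ (-2:ℝ) + (9 * t^2) * r ^ (-4:ℝ) := by
    intro r hr
    have hr' : a < r := hr
    have hrpos : (0:ℝ) < r := lt_trans hapos hr'
    have h1 : deriv (fun s => v s r) t = r ^ (-3:ℝ) := by
      have hopen : IsOpen {s : ℝ | R + |s| < r} :=
        isOpen_lt (continuous_const.add continuous_abs) continuous_const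
      have hev : (fun s => v s r) =ᶠ[nhds t] (fun s => s * r ^ (-3:ℝ)) :=
        Filter.eventuallyEq_of_mem (hopen.mem_nhds hr')
          (fun s hs => hcone s r (le_of_lt hs))
      rw [hev.deriv_eq]
      exact (hasDerivAt_mul_const (r ^ (-3:ℝ))).deriv
    have h2 : deriv (v t) r = t * (-3 * r ^ (-4:ℝ)) := by
      have hev : (v t) =ᶠ[nhds r] (fun ρ => t * ρ ^ (-3:ℝ)) :=
        Filter.eventuallyEq_of_mem (isOpen_Ioi.mem_nhds hr')
          (fun ρ hρ => hcone t ρ (le_of_lt hρ))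
      rw [hev.deriv_eq]
      exact ((hasDerivAt_negthree hrpos).const_mul t).deriv
    rw [h1, h2]
    have e3 : (r ^ (-3:ℝ))^2 = r ^ (-6:ℝ) := by
      rw [sq, ← Real.rpow_add hrpos]; norm_num
    have e4 : (r ^ (-4:ℝ))^2 = r ^ (-8:ℝ) := by
      rw [sq, ← Real.rpow_add hrpos]; norm_num
    have e5 : ((r ^ (-3:ℝ))^2 + (t * (-3 * r ^ (-4:ℝ)))^2) * r^4
        = r ^ (-6:ℝ) * r ^ ((4:ℕ):ℝ) + (9 * t^2) * (r ^ (-8:ℝ) * r ^ ((4:ℕ):ℝ)) := by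
      rw [← e3, ← e4, ← Real.rpow_natCast r 4]; ring
    rw [e5, ← Real.rpow_add hrpos, ← Real.rpow_add hrpos]
    norm_num
  rw [setIntegral_congr_fun measurableSet_Ioi hcongr]
  have hi1 : IntegrableOn (fun r : ℝ => r ^ (-2:ℝ)) (Ioi a) :=
    integrableOn_Ioi_rpow_of_lt (by norm_num) hapos
  have hi2 : IntegrableOn (fun r : ℝ => (9 * t^2) * r ^ (-4:ℝ)) (Ioi a) :=
    (integrableOn_Ioi_rpow_of_lt (by norm_num) hapos).const_mul _
  rw [MeasureTheory.integral_add hi1 hi2, integral_const_mul _ _,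
    integral_Ioi_rpow_of_lt (by norm_num) hapos,
    integral_Ioi_rpow_of_lt (by norm_num) hapos]
  norm_num
  ring


lemma tendsto_base (R : ℝ) : Filter.Tendsto (fun t : ℝ => R + |t|) Filter.atTop Filter.atTop :=
  Filter.tendsto_atTop_add_const_left _ R Filter.tendsto_abs_atTop_atTop

lemma w_energy_tendsto (R : ℝ) :
    Filter.Tendsto (fun t : ℝ => 3 * (R + |t|) ^ (-3:ℝ)) Filter.atTop (nhds 0) := by
  have h2 : Filter.Tendsto (fun x : ℝ => x ^ (-3:ℝ)) Filter.atTop (nhds 0) := by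
    simpa using tendsto_rpow_neg_atTop (show (0:ℝ) < 3 by norm_num)
  have := (h2.comp (tendsto_base R)).const_mul (3:ℝ)
  simpa using this

lemma v_energy_tendsto (R : ℝ) (hR : 0 < R) :
    Filter.Tendsto (fun t : ℝ => (R + |t|) ^ (-1:ℝ) + 3 * t^2 * (R + |t|) ^ (-3:ℝ))
      Filter.atTop (nhds 0) := by
  have h1 : Filter.Tendsto (fun t : ℝ => (R + |t|) ^ (-1:ℝ)) Filter.atTop (nhds 0) := by
    have h2 : Filter.Tendsto (fun x : ℝ => x ^ (-1:ℝ)) Filter.atTop (nhds 0) := by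
      simpa using tendsto_rpow_neg_atTop (show (0:ℝ) < 1 by norm_num)
    exact h2.comp (tendsto_base R)
  have h2 : Filter.Tendsto (fun t : ℝ => 3 * t^2 * (R + |t|) ^ (-3:ℝ))
      Filter.atTop (nhds 0) := by
    have hup : Filter.Tendsto (fun t : ℝ => 3 * t ^ (-1:ℝ)) Filter.atTop (nhds 0) := by
      have := (tendsto_rpow_neg_atTop (show (0:ℝ) < 1 by norm_num)).const_mul (3:ℝ)
      simpa using this
    apply tendsto_of_tendsto_of_tendsto_of_le_of_le' tendsto_const_nhds hup
    · filter_upwards [Filter.eventually_ge_atTop (1:ℝ)] with t ht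
      have hbase : (0:ℝ) < R + |t| := by have := abs_nonneg t; linarith
      have : (0:ℝ) ≤ (R + |t|) ^ (-3:ℝ) := le_of_lt (Real.rpow_pos_of_pos hbase _)
      positivity
    · filter_upwards [Filter.eventually_ge_atTop (1:ℝ)] with t ht
      have htpos : (0:ℝ) < t := lt_of_lt_of_le one_pos ht
      have hle : t ≤ R + |t| := by
        have := le_abs_self t; linarith
      have hmono : (R + |t|) ^ (-3:ℝ) ≤ t ^ (-3:ℝ) :=
        Real.rpow_le_rpow_of_nonpos htpos hle (by norm_num)
      have hsq : t^2 * t ^ (-3:ℝ) = t ^ (-1:ℝ) := by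
        rw [← Real.rpow_natCast t 2, ← Real.rpow_add htpos]
        norm_num
      calc 3 * t^2 * (R + |t|) ^ (-3:ℝ) ≤ 3 * t^2 * t ^ (-3:ℝ) := by
            apply mul_le_mul_of_nonneg_left hmono
            positivity
        _ = 3 * t ^ (-1:ℝ) := by rw [mul_assoc, hsq]
  have := h1.add h2
  simpa using this


end WaveAux


/-- Free radial waves on `ℝ^{1+5}` with exterior data `(r⁻³, 0)` (resp. `(0, r⁻³)`) on
`r ≥ R` equal `r⁻³` (resp. `t r⁻³`) on the exterior cone `{r ≥ R + |t|}`, and their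
exterior energies tend to `0` as `t → ∞`. -/
theorem stmt11 (R : ℝ) (hR : 0 < R) (w v : ℝ → ℝ → ℝ)
    (hw : ContDiffOn ℝ (⊤ : ℕ∞) (fun p : ℝ × ℝ => w p.1 p.2) {p : ℝ × ℝ | 0 < p.2})
    (hv : ContDiffOn ℝ (⊤ : ℕ∞) (fun p : ℝ × ℝ => v p.1 p.2) {p : ℝ × ℝ | 0 < p.2})
    (hweq : ∀ t : ℝ, ∀ r > (0:ℝ),
      deriv (fun s => deriv (fun s' => w s' r) s) t -
        deriv (fun ρ => deriv (fun ρ' => w t ρ') ρ) r - (4/r) * deriv (w t) r = 0)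
    (hveq : ∀ t : ℝ, ∀ r > (0:ℝ),
      deriv (fun s => deriv (fun s' => v s' r) s) t -
        deriv (fun ρ => deriv (fun ρ' => v t ρ') ρ) r - (4/r) * deriv (v t) r = 0)
    (hw0 : ∀ r ≥ R, w 0 r = r ^ (-3:ℝ))
    (hw0in : ∀ r > (0:ℝ), r ≤ R/2 → w 0 r = 0)
    (hwt0 : ∀ r > (0:ℝ), deriv (fun t => w t r) 0 = 0)
    (hv0 : ∀ r ≥ R, v 0 r = 0)
    (hvt0 : ∀ r ≥ R, deriv (fun t => v t r) 0 = r ^ (-3:ℝ)) :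
    (∀ t r : ℝ, R + |t| ≤ r → w t r = r ^ (-3:ℝ)) ∧
    (∀ t r : ℝ, R + |t| ≤ r → v t r = t * r ^ (-3:ℝ)) ∧
    Filter.Tendsto (fun t : ℝ => ∫ r in Set.Ioi (R + |t|),
      ((deriv (fun s => w s r) t)^2 + (deriv (w t) r)^2) * r^4)
      Filter.atTop (nhds 0) ∧
    Filter.Tendsto (fun t : ℝ => ∫ r in Set.Ioi (R + |t|),
      ((deriv (fun s => v s r) t)^2 + (deriv (v t) r)^2) * r^4)
      Filter.atTop (nhds 0) := by
  have hconew := w_cone R hR w hw hweq hw0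
    (fun r hr => hwt0 r (lt_of_lt_of_le hR hr))
  have hconev := v_cone R hR v hv hveq hv0 hvt0
  refine ⟨hconew, hconev, ?_, ?_⟩
  · exact Filter.Tendsto.congr
      (fun t => (w_energy R hR w hconew t).symm)
      (w_energy_tendsto R)
  · exact Filter.Tendsto.congr
      (fun t => (v_energy R hR v hconev t).symm)
      (v_energy_tendsto R hR)
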